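/- For every x ∈ ℝ³ and every direction v ∈ ℝ³, (DG(x)[v])·G(x)⁻¹ + G(x)⁻¹·(DG(x)[v]) = (2iℓ/(ℓ² + r²))·(v·τ). -/

import Mathlib

open Matrix Complex

noncomputable section

attribute [local instance] Matrix.normedAddCommGroup Matrix.normedSpace

/-- The Pauli matrices τ₁, τ₂, τ₃. -/
def pauli : Fin 3 → Matrix (Fin 2) (Fin 2) ℂ :=
  ![!![0, 1; 1, 0], !![0, -I; I, 0], !![1, 0; 0, -1]]

/-- The Pauli vector x·τ = x₁τ₁ + x₂τ₂ + x₃τ₃ for x ∈ ℝ³. -/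
def pauliVec (x : EuclideanSpace ℝ (Fin 3)) : Matrix (Fin 2) (Fin 2) ℂ :=
  (x 0 : ℂ) • pauli 0 + (x 1 : ℂ) • pauli 1 + (x 2 : ℂ) • pauli 2

/-- G(x) = (ℓ·I + i x·τ)/√(ℓ² + r²), the inverse gnomonic projection. -/
def Gmap (ℓ : ℝ) (x : EuclideanSpace ℝ (Fin 3)) : Matrix (Fin 2) (Fin 2) ℂ :=
  (((Real.sqrt (ℓ ^ 2 + ‖x‖ ^ 2))⁻¹ : ℝ) : ℂ) •
    ((ℓ : ℂ) • (1 : Matrix (Fin 2) (Fin 2) ℂ) + I • pauliVec x)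

/-- H(x) = ((ℓ² − r²)·I + 2iℓ x·τ)/(ℓ² + r²), the inverse stereographic projection. -/
def Hmap (ℓ : ℝ) (x : EuclideanSpace ℝ (Fin 3)) : Matrix (Fin 2) (Fin 2) ℂ :=
  ((((ℓ ^ 2 + ‖x‖ ^ 2))⁻¹ : ℝ) : ℂ) •
    (((ℓ ^ 2 - ‖x‖ ^ 2 : ℝ) : ℂ) • (1 : Matrix (Fin 2) (Fin 2) ℂ)
      + ((2 * ℓ : ℝ) : ℂ) • I • pauliVec x)

/-!
Write `X = x·τ`, `V = v·τ`, `q = ℓ² + r²` and `G = q^(-1/2) (ℓ + iX)`. The Pauli relations give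
`XV + VX = 2⟪x, v⟫`, in particular `X² = r²`, so `(ℓ + iX)(ℓ - iX) = q` and
`G⁻¹ = q^(-1/2) (ℓ - iX)`. By the product rule `DG(x)[v] = q^(-1/2) (iV - (⟪x, v⟫/q)(ℓ + iX))`.
In the anticommutator with `G⁻¹`, the second term contributes `-2⟪x, v⟫/q`, while
`iV(ℓ - iX) + (ℓ - iX)iV = 2iℓV + (VX + XV) = 2iℓV + 2⟪x, v⟫`: the radial terms cancel.
-/

open scoped RealInnerProductSpace

lemma pauliVec_mul_add_mul_pauliVec (x y : EuclideanSpace ℝ (Fin 3)) :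
    pauliVec x * pauliVec y + pauliVec y * pauliVec x = ((2 * ⟪x, y⟫ : ℝ) : ℂ) • 1 := by
  have hxy : ⟪x, y⟫ = x 0 * y 0 + x 1 * y 1 + x 2 * y 2 := by
    simp [PiLp.inner_apply, Fin.sum_univ_three, mul_comm]
  rw [hxy]
  ext i j
  fin_cases i <;> fin_cases j <;>
    simp [pauliVec, pauli] <;> ring_nf <;> simp

lemma pauliVec_mul_self (x : EuclideanSpace ℝ (Fin 3)) :
    pauliVec x * pauliVec x = ((‖x‖ ^ 2 : ℝ) : ℂ) • 1 := by
  have h := pauliVec_mul_add_mul_pauliVec x x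
  rw [real_inner_self_eq_norm_sq, ← two_smul ℂ, Complex.ofReal_mul, mul_smul] at h
  exact smul_right_injective _ two_ne_zero h

lemma differentiable_pauliVec : Differentiable ℝ pauliVec := by
  unfold pauliVec
  fun_prop

lemma fderiv_pauliVec_apply (x v : EuclideanSpace ℝ (Fin 3)) :
    fderiv ℝ pauliVec x v = pauliVec v := by
  let L : EuclideanSpace ℝ (Fin 3) →L[ℝ] Matrix (Fin 2) (Fin 2) ℂ :=
    (EuclideanSpace.proj 0).smulRight (pauli 0) + (EuclideanSpace.proj 1).smulRight (pauli 1) +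
      (EuclideanSpace.proj 2).smulRight (pauli 2)
  have hL : ⇑L = pauliVec := by
    ext x i j
    simp [L, pauliVec, Complex.real_smul]
  rw [← hL, L.fderiv]

lemma hasFDerivAt_inv_sqrt_sq_add_norm_sq {E : Type*} [NormedAddCommGroup E]
    [InnerProductSpace ℝ E] (ℓ : ℝ) {x : E} (hq : 0 < ℓ ^ 2 + ‖x‖ ^ 2) :
    HasFDerivAt (fun y : E => (√(ℓ ^ 2 + ‖y‖ ^ 2))⁻¹)
      ((-(√(ℓ ^ 2 + ‖x‖ ^ 2) * (ℓ ^ 2 + ‖x‖ ^ 2))⁻¹) • innerSL ℝ x) x := by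
  have hs : √(ℓ ^ 2 + ‖x‖ ^ 2) ≠ 0 := (Real.sqrt_pos.mpr hq).ne'
  have h := (hasDerivAt_inv hs).comp_hasFDerivAt x
    (((hasStrictFDerivAt_norm_sq x).hasFDerivAt.const_add (ℓ ^ 2)).sqrt hq.ne')
  refine h.congr_fderiv ?_
  ext v
  simp only [_root_.smul_apply, innerSL_apply_apply, smul_eq_mul, nsmul_eq_mul]
  rw [Real.sq_sqrt hq.le]
  field_simp
  ring

lemma fderiv_ofReal_smul_const_add_I_smul_apply {E F : Type*} [NormedAddCommGroup E]
    [NormedSpace ℝ E] [NormedAddCommGroup F] [NormedSpace ℂ F] {f : E → ℝ} {f' : E →L[ℝ] ℝ}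
    {P : E → F} {P' : E →L[ℝ] F} {x : E} (c : F) (hf : HasFDerivAt f f' x)
    (hP : HasFDerivAt P P' x) (v : E) :
    fderiv ℝ (fun y => (f y : ℂ) • (c + I • P y)) x v =
      (f x : ℂ) • (I • P' v) + (f' v : ℂ) • (c + I • P x) := by
  have hG : HasFDerivAt (fun y => (f y : ℂ) • (c + I • P y)) _ x :=
    (ofRealCLM.hasFDerivAt.comp x hf).smul ((hP.const_smul I).const_add c)
  rw [hG.fderiv]
  simp

lemma fderiv_Gmap_apply (ℓ : ℝ) {x : EuclideanSpace ℝ (Fin 3)} (hq : 0 < ℓ ^ 2 + ‖x‖ ^ 2)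
    (v : EuclideanSpace ℝ (Fin 3)) :
    fderiv ℝ (Gmap ℓ) x v = (((√(ℓ ^ 2 + ‖x‖ ^ 2))⁻¹ : ℝ) : ℂ) •
      (I • pauliVec v - ((⟪x, v⟫ / (ℓ ^ 2 + ‖x‖ ^ 2) : ℝ) : ℂ) •
        ((ℓ : ℂ) • (1 : Matrix (Fin 2) (Fin 2) ℂ) + I • pauliVec x)) := by
  refine (fderiv_ofReal_smul_const_add_I_smul_apply ((ℓ : ℂ) • 1)
    (hasFDerivAt_inv_sqrt_sq_add_norm_sq ℓ hq) (differentiable_pauliVec x).hasFDerivAt v).trans ?_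
  -- `erw`: the matrix norm is only a local instance, so the topology on matrices here comes from
  -- the norm, while in `fderiv_pauliVec_apply` it is `instTopologicalSpaceMatrix` (defeq, not reducibly)
  erw [fderiv_pauliVec_apply]
  rw [_root_.smul_apply, innerSL_apply_apply, smul_eq_mul, mul_inv]
  match_scalars <;> ring

lemma smul_one_add_I_smul_pauliVec_mul_sub (ℓ : ℝ) (x : EuclideanSpace ℝ (Fin 3)) :
    ((ℓ : ℂ) • (1 : Matrix (Fin 2) (Fin 2) ℂ) + I • pauliVec x) * ((ℓ : ℂ) • 1 - I • pauliVec x) =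
      ((ℓ ^ 2 + ‖x‖ ^ 2 : ℝ) : ℂ) • 1 := by
  simp only [add_mul, mul_sub, smul_mul_smul_comm, mul_one, one_mul, pauliVec_mul_self,
    smul_smul]
  match_scalars
  · linear_combination (-(‖x‖ : ℂ) ^ 2) * I_mul_I
  · ring

lemma Gmap_inv (ℓ : ℝ) {x : EuclideanSpace ℝ (Fin 3)} (hq : 0 < ℓ ^ 2 + ‖x‖ ^ 2) :
    (Gmap ℓ x)⁻¹ = (((√(ℓ ^ 2 + ‖x‖ ^ 2))⁻¹ : ℝ) : ℂ) •
      ((ℓ : ℂ) • (1 : Matrix (Fin 2) (Fin 2) ℂ) - I • pauliVec x) := by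
  refine Matrix.inv_eq_right_inv ?_
  rw [Gmap, smul_mul_smul_comm, smul_one_add_I_smul_pauliVec_mul_sub, smul_smul, ← ofReal_mul,
    ← ofReal_mul, ← mul_inv, Real.mul_self_sqrt hq.le, inv_mul_cancel₀ hq.ne', ofReal_one,
    one_smul]

lemma I_smul_pauliVec_sub_smul_anticomm (ℓ c : ℝ) (x v : EuclideanSpace ℝ (Fin 3)) :
    (I • pauliVec v - (c : ℂ) • ((ℓ : ℂ) • (1 : Matrix (Fin 2) (Fin 2) ℂ) + I • pauliVec x)) *
        ((ℓ : ℂ) • 1 - I • pauliVec x) +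
      ((ℓ : ℂ) • 1 - I • pauliVec x) *
        (I • pauliVec v - (c : ℂ) • ((ℓ : ℂ) • 1 + I • pauliVec x)) =
      (2 * ℓ * I) • pauliVec v + ((2 * (⟪x, v⟫ - c * (ℓ ^ 2 + ‖x‖ ^ 2)) : ℝ) : ℂ) • 1 := by
  have hvx : pauliVec v * pauliVec x = ((2 * ⟪x, v⟫ : ℝ) : ℂ) • 1 - pauliVec x * pauliVec v :=
    eq_sub_of_add_eq' (pauliVec_mul_add_mul_pauliVec x v)
  simp only [add_mul, mul_add, sub_mul, mul_sub, smul_mul_assoc, mul_smul_comm, mul_one, one_mul,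
    pauliVec_mul_self, hvx, smul_sub, smul_add, smul_smul]
  match_scalars
  · ring
  · linear_combination 2 * ((c : ℂ) * (‖x‖ : ℂ) ^ 2 - ⟪x, v⟫) * I_mul_I
  · ring
  · ring

/-- dG G⁻¹ + G⁻¹ dG = (2iℓ/(ℓ² + r²))·(v·τ). -/
theorem dG_Ginv_add_Ginv_dG (ℓ : ℝ) (hℓ : 0 < ℓ) (x v : EuclideanSpace ℝ (Fin 3)) :
    fderiv ℝ (Gmap ℓ) x v * (Gmap ℓ x)⁻¹ + (Gmap ℓ x)⁻¹ * fderiv ℝ (Gmap ℓ) x v =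
      (2 * (ℓ : ℂ) * I / ((ℓ ^ 2 + ‖x‖ ^ 2 : ℝ) : ℂ)) • pauliVec v := by
  have hq : 0 < ℓ ^ 2 + ‖x‖ ^ 2 := by positivity
  have hradial : ⟪x, v⟫ - ⟪x, v⟫ / (ℓ ^ 2 + ‖x‖ ^ 2) * (ℓ ^ 2 + ‖x‖ ^ 2) = 0 := by
    rw [div_mul_cancel₀ _ hq.ne', sub_self]
  rw [fderiv_Gmap_apply ℓ hq, Gmap_inv ℓ hq, smul_mul_smul_comm, smul_mul_smul_comm, ← smul_add,
    I_smul_pauliVec_sub_smul_anticomm, hradial, mul_zero, ofReal_zero, zero_smul, add_zero,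
    smul_smul, ← ofReal_mul, ← mul_inv, Real.mul_self_sqrt hq.le]
  congr 1
  push_cast
  ring
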